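/- arXiv:1710.07133 — 4 statements merged into one kernel-verified Lean document; each statement's English description precedes it below -/
import Mathlib

section
/- Let (μ, P, H) be an admissible triple in ℝ³ whose support supp μ is contained in the closed unit ball {x ∈ ℝ³ : |x| ≤ 1}. Then the Willmore energy dominates the mass: ∫ |H|² dμ ≥ μ(ℝ³). -/
open MeasureTheory Metric Filter Topology
open scoped RealInnerProductSpace ENNReal

noncomputable section

/-- Euclidean three-space. -/
abbrev E3 : Type := EuclideanSpace ℝ (Fin 3)

/-- The support of a measure: points all of whose neighbourhoods have positive measure. -/
def mSupport (μ : Measure E3) : Set E3 := {x | ∀ r > 0, 0 < μ (ball x r)}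

/-- An admissible triple `(μ, P, H)`: a finite compactly supported Borel measure, a measurable
family of maps which μ-a.e. are orthogonal projections onto 2-dimensional planes (idempotent,
symmetric, of rank two), and an `L²(μ)` generalized mean curvature `H` satisfying the first
variation identity `∫ trace(P x ∘ DX x) dμ = -2 ∫ ⟨X x, H x⟩ dμ` for every compactly supported
`C¹` vector field `X`. -/
structure IsAdmissible (μ : Measure E3) (P : E3 → E3 →L[ℝ] E3) (H : E3 → E3) : Prop where
  finite : IsFiniteMeasure μ
  compact_support : IsCompact (mSupport μ)
  meas_P : ∀ v : E3, Measurable fun x => P x v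
  meas_H : AEStronglyMeasurable H μ
  proj_ae : ∀ᵐ x ∂μ, (P x).comp (P x) = P x ∧
      (∀ u v : E3, ⟪P x u, v⟫ = ⟪u, P x v⟫) ∧
      Module.finrank ℝ (LinearMap.range ((P x : E3 →ₗ[ℝ] E3))) = 2
  memL2 : MemLp H 2 μ
  first_variation : ∀ X : E3 → E3, ContDiff ℝ 1 X → HasCompactSupport X →
      ∫ x, LinearMap.trace ℝ E3 ((P x).comp (fderiv ℝ X x) : E3 →ₗ[ℝ] E3) ∂μ
        = -2 * ∫ x, ⟪X x, H x⟫ ∂μ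

/-- The generalized mean curvature is perpendicular: `(P x) (H x) = 0` for μ-a.e. `x`. -/
def IsPerp (μ : Measure E3) (P : E3 → E3 →L[ℝ] E3) (H : E3 → E3) : Prop :=
  ∀ᵐ x ∂μ, P x (H x) = 0

/-- The Willmore energy of an admissible triple. -/
def Willmore (μ : Measure E3) (H : E3 → E3) : ℝ := ∫ x, ‖H x‖ ^ 2 ∂μ

/-- The mass of a measure. -/
def Mass (μ : Measure E3) : ℝ := (μ Set.univ).toReal

/-!
Test the first variation identity with (a compactly supported cutoff of) the position field
`X x = x`. Its derivative is the identity on the support and `trace (P x) = 2`, so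
`μ(ℝ³) = -∫ ⟨x, H⟩ dμ`. On the unit ball `|⟨x, H⟩| ≤ |H| ≤ (1 + |H|²) / 2`, hence
`μ(ℝ³) ≤ (μ(ℝ³) + W(μ)) / 2`.
-/

lemma ae_mem_mSupport (μ : Measure E3) : ∀ᵐ x ∂μ, x ∈ mSupport μ := by
  rw [ae_iff]
  refine measure_null_of_locally_null _ fun x hx => ?_
  obtain ⟨r, hr, hr0⟩ : ∃ r > 0, μ (ball x r) ≤ 0 := by simpa [mSupport] using hx
  exact ⟨ball x r, mem_nhdsWithin_of_mem_nhds (ball_mem_nhds x hr), le_antisymm hr0 bot_le⟩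

lemma exists_contDiff_hasCompactSupport_eventuallyEq_id {E : Type*} [NormedAddCommGroup E]
    [NormedSpace ℝ E] [FiniteDimensional ℝ E] [HasContDiffBump E] (n : ℕ∞) (r : ℝ) :
    ∃ X : E → E, ContDiff ℝ n X ∧ HasCompactSupport X ∧
      ∀ x ∈ closedBall (0 : E) r, X =ᶠ[𝓝 x] id := by
  let f : ContDiffBump (0 : E) := ⟨|r| + 1, |r| + 2, by positivity, by linarith⟩
  refine ⟨fun x => f x • x, f.contDiff.smul contDiff_id,
    f.hasCompactSupport.mono (Function.support_smul_subset_left _ _), fun x hx => ?_⟩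
  have hx' : x ∈ ball (0 : E) (|r| + 1) :=
    closedBall_subset_ball (by linarith [le_abs_self r]) hx
  filter_upwards [isOpen_ball.mem_nhds hx'] with y hy
  simp [f.one_of_mem_closedBall (ball_subset_closedBall hy)]

namespace IsAdmissible

variable {μ : Measure E3} {P : E3 → E3 →L[ℝ] E3} {H : E3 → E3}

lemma ae_trace_eq_two (hadm : IsAdmissible μ P H) :
    ∀ᵐ x ∂μ, LinearMap.trace ℝ E3 (P x : E3 →ₗ[ℝ] E3) = 2 := by
  filter_upwards [hadm.proj_ae] with x ⟨hidem, _, hrank⟩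
  have hidem' : IsIdempotentElem (P x : E3 →ₗ[ℝ] E3) :=
    congrArg ContinuousLinearMap.toLinearMap hidem
  rw [(LinearMap.IsIdempotentElem.isProj_range _ hidem').trace, hrank, Nat.cast_ofNat]

lemma mass_eq_neg_integral_inner (hadm : IsAdmissible μ P H) :
    Mass μ = -∫ x, ⟪x, H x⟫ ∂μ := by
  have := hadm.finite
  obtain ⟨R, hR⟩ := hadm.compact_support.isBounded.subset_closedBall 0
  obtain ⟨X, hX, hXc, hXid⟩ := exists_contDiff_hasCompactSupport_eventuallyEq_id (E := E3) 1 R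
  have hae_supp := ae_mem_mSupport μ
  have htrace : ∫ x, LinearMap.trace ℝ E3 ((P x).comp (fderiv ℝ X x) : E3 →ₗ[ℝ] E3) ∂μ
      = 2 * Mass μ := by
    rw [integral_congr_ae (g := fun _ => (2 : ℝ)), integral_const, smul_eq_mul, mul_comm]
    · rfl
    filter_upwards [hae_supp, hadm.ae_trace_eq_two] with x hx htr
    rw [(hXid x (hR hx)).fderiv_eq, fderiv_id, ContinuousLinearMap.comp_id, htr]
  have hinner : ∫ x, ⟪X x, H x⟫ ∂μ = ∫ x, ⟪x, H x⟫ ∂μ := by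
    refine integral_congr_ae ?_
    filter_upwards [hae_supp] with x hx
    rw [(hXid x (hR hx)).eq_of_nhds, id]
  have := hadm.first_variation X hX hXc
  rw [htrace, hinner] at this
  linarith

end IsAdmissible

lemma abs_integral_inner_le_integral_norm {E α : Type*} [NormedAddCommGroup E]
    [InnerProductSpace ℝ E] [MeasurableSpace α] {μ : Measure α} {x H : α → E}
    (hx : ∀ᵐ a ∂μ, ‖x a‖ ≤ 1) (hH : Integrable H μ) :
    |∫ a, ⟪x a, H a⟫ ∂μ| ≤ ∫ a, ‖H a‖ ∂μ := by
  rw [← Real.norm_eq_abs]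
  refine norm_integral_le_of_norm_le hH.norm ?_
  filter_upwards [hx] with a ha
  calc ‖⟪x a, H a⟫‖ ≤ ‖x a‖ * ‖H a‖ := norm_inner_le_norm _ _
    _ ≤ ‖H a‖ := mul_le_of_le_one_left (norm_nonneg _) ha

lemma integral_norm_le_half_measureReal_add_integral_sq {α F : Type*} [MeasurableSpace α]
    [NormedAddCommGroup F] {μ : Measure α} [IsFiniteMeasure μ] {g : α → F} (hg : MemLp g 2 μ) :
    ∫ a, ‖g a‖ ∂μ ≤ (μ.real Set.univ + ∫ a, ‖g a‖ ^ 2 ∂μ) / 2 := by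
  have hsq : Integrable (fun a => ‖g a‖ ^ 2) μ := hg.norm.integrable_sq
  calc ∫ a, ‖g a‖ ∂μ ≤ ∫ a, (1 + ‖g a‖ ^ 2) / 2 ∂μ :=
        integral_mono (hg.integrable one_le_two).norm (((integrable_const 1).add hsq).div_const 2)
          fun a => by nlinarith [sq_nonneg (‖g a‖ - 1)]
    _ = (μ.real Set.univ + ∫ a, ‖g a‖ ^ 2 ∂μ) / 2 := by
        rw [integral_div, integral_add (integrable_const 1) hsq, integral_const, smul_eq_mul,
          mul_one]

/-- Willmore-vs-Area inequality in the unit ball: if the support of an admissible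
triple is contained in the closed unit ball, then `∫ |H|² dμ ≥ μ(ℝ³)`. -/
theorem willmore_vs_area_inequality (μ : Measure E3) (P : E3 → E3 →L[ℝ] E3) (H : E3 → E3)
    (hadm : IsAdmissible μ P H) (hsupp : mSupport μ ⊆ closedBall 0 1) :
    Mass μ ≤ Willmore μ H := by
  have := hadm.finite
  have hball : ∀ᵐ x ∂μ, ‖x‖ ≤ 1 := by
    filter_upwards [ae_mem_mSupport μ] with x hx
    simpa using hsupp hx
  have hmass := hadm.mass_eq_neg_integral_inner
  have hinner := abs_integral_inner_le_integral_norm (x := fun a => a) hball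
    (hadm.memL2.integrable one_le_two)
  have hamgm := integral_norm_le_half_measureReal_add_integral_sq hadm.memL2
  have hreal : Mass μ = μ.real Set.univ := rfl
  rw [Willmore]
  linarith [neg_le_abs (∫ x, ⟪x, H x⟫ ∂μ)]

end
end

section
/- There exists a constant C > 0, independent of all the data, with the following property. Let (μ, P, H) be an admissible triple in ℝ³ with H perpendicular and let y ∈ ℝ³ satisfy liminf_{σ→0} μ(B_σ(y))/σ² ≥ π. Then for every ρ > 0, π ≤ C ( μ(B_ρ(y))/ρ² + ∫_{B_ρ(y)} |H|² dμ ). -/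
open MeasureTheory Metric Filter
open scoped RealInnerProductSpace ENNReal

noncomputable section

/-! Simon's monotonicity argument. Test the first variation with the radial field
`X x = η (|x - y|² / ρ²) (|x - y|² + σ²)⁻¹ (x - y)`, where the cutoff `η` is `1` on `(-∞, 1/4]`
and `0` on `[1/2, ∞)`, with `|η'| ≤ K`. As `P x` is an orthogonal projection of rank two and `H`
is perpendicular, the tangential divergence of `X` plus `2 ⟨X, H⟩` is at least
`2 σ² η / (|x - y|² + σ²)² ≥ 1 / (2σ²)` on `B_σ(y)`, up to the error `2K/ρ² + |H|²/2` on `B_ρ(y)`.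
The first variation identity makes the integral of the former vanish, so for `σ ≤ ρ/2`
`μ(B_σ(y))/σ² ≤ 4K μ(B_ρ(y))/ρ² + ∫_{B_ρ(y)} |H|²`, and letting `σ → 0` gives the bound with
`C = 4K + 1`. -/

open Real in
def cutoff (t : ℝ) : ℝ := smoothTransition (2 - 4 * t)

namespace cutoff

open Real

lemma nonneg (t : ℝ) : 0 ≤ cutoff t := smoothTransition.nonneg _

lemma le_one (t : ℝ) : cutoff t ≤ 1 := smoothTransition.le_one _

lemma eq_one_of_le {t : ℝ} (ht : t ≤ 1 / 4) : cutoff t = 1 :=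
  smoothTransition.one_of_one_le (by linarith)

lemma eq_zero_of_le {t : ℝ} (ht : 1 / 2 ≤ t) : cutoff t = 0 :=
  smoothTransition.zero_of_nonpos (by linarith)

lemma contDiff {n : ℕ∞} : ContDiff ℝ n cutoff :=
  smoothTransition.contDiff.comp (contDiff_const.sub (contDiff_const.mul contDiff_id))

lemma deriv_eq_zero_of_notMem_Icc {t : ℝ} (ht : t ∉ Set.Icc (1 / 4 : ℝ) (1 / 2)) :
    deriv cutoff t = 0 := by
  rcases not_and_or.mp ht with ht | ht <;> rw [not_le] at ht
  · have : cutoff =ᶠ[nhds t] fun _ => 1 := by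
      filter_upwards [Iio_mem_nhds ht] with s hs using eq_one_of_le hs.le
    rw [this.deriv_eq, deriv_const]
  · have : cutoff =ᶠ[nhds t] fun _ => 0 := by
      filter_upwards [Ioi_mem_nhds ht] with s hs using eq_zero_of_le hs.le
    rw [this.deriv_eq, deriv_const]

lemma exists_abs_deriv_le : ∃ K, ∀ t, |deriv cutoff t| ≤ K :=
  (contDiff (n := 1)).continuous_deriv le_rfl |>.bounded_above_of_compact_support <|
    HasCompactSupport.intro isCompact_Icc fun _ ht => deriv_eq_zero_of_notMem_Icc ht

end cutoff

section OrthogonalProjection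

variable {E : Type*} [NormedAddCommGroup E] [InnerProductSpace ℝ E]

lemma trace_comp_smul_id_add_smulRight [FiniteDimensional ℝ E] (A : E →L[ℝ] E) (a b : ℝ)
    (w : E) :
    LinearMap.trace ℝ E ((A ∘L (a • ContinuousLinearMap.id ℝ E
        + b • (innerSL ℝ w).smulRight w)) : E →ₗ[ℝ] E)
      = a * LinearMap.trace ℝ E (A : E →ₗ[ℝ] E) + b * ⟪w, A w⟫ := by
  have : ((A ∘L (a • ContinuousLinearMap.id ℝ E + b • (innerSL ℝ w).smulRight w)) : E →ₗ[ℝ] E)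
      = a • (A : E →ₗ[ℝ] E) + b • (innerₛₗ ℝ w).smulRight (A w) := by
    ext v; simp [smul_smul]
  rw [this, map_add, map_smul, map_smul, LinearMap.trace_smulRight]
  simp

variable {p : E →L[ℝ] E}

lemma trace_eq_finrank_range_of_comp_self [FiniteDimensional ℝ E] (hidem : p ∘L p = p) :
    LinearMap.trace ℝ E (p : E →ₗ[ℝ] E) = Module.finrank ℝ (LinearMap.range (p : E →ₗ[ℝ] E)) :=
  (LinearMap.IsIdempotentElem.isProj_range _
    (congrArg ContinuousLinearMap.toLinearMap hidem)).trace

variable (hsymm : ∀ u v, ⟪p u, v⟫ = ⟪u, p v⟫)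
include hsymm

lemma inner_eq_inner_sub_apply {w h : E} (hh : p h = 0) : ⟪w, h⟫ = ⟪w - p w, h⟫ := by
  rw [inner_sub_left, hsymm, hh, inner_zero_right, sub_zero]

variable (hidem : p ∘L p = p)
include hidem

lemma inner_apply_self_eq_norm_sq (w : E) : ⟪w, p w⟫ = ‖p w‖ ^ 2 := by
  rw [← real_inner_self_eq_norm_sq, hsymm, ← ContinuousLinearMap.comp_apply, hidem]

lemma norm_sq_eq_norm_sq_apply_add (w : E) : ‖w‖ ^ 2 = ‖p w‖ ^ 2 + ‖w - p w‖ ^ 2 := by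
  have : ⟪p w, w - p w⟫ = 0 := by
    rw [inner_sub_right, hsymm, hsymm w, ← ContinuousLinearMap.comp_apply, hidem, sub_self]
  simpa [sq] using norm_add_sq_eq_norm_sq_add_norm_sq_real this

lemma opNorm_le_one_of_comp_self : ‖p‖ ≤ 1 := by
  refine p.opNorm_le_bound zero_le_one fun w => ?_
  have h : ‖p w‖ ^ 2 ≤ ‖w‖ * ‖p w‖ := by
    rw [← inner_apply_self_eq_norm_sq hsymm hidem]; exact real_inner_le_norm _ _
  nlinarith [norm_nonneg (p w), norm_nonneg w]

end OrthogonalProjection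

lemma measurable_of_measurable_apply {α E F : Type*} [MeasurableSpace α]
    [NormedAddCommGroup E] [NormedSpace ℝ E] [FiniteDimensional ℝ E]
    [NormedAddCommGroup F] [NormedSpace ℝ F] [FiniteDimensional ℝ F]
    [MeasurableSpace F] [BorelSpace F] {P : α → E →L[ℝ] F}
    (hP : ∀ v, Measurable fun x => P x v) : Measurable P := by
  let b := Module.finBasis ℝ E
  let Φ : (Fin _ → F) ≃ₗ[ℝ] (E →L[ℝ] F) := (b.constr ℝ).trans LinearMap.toContinuousLinearMap
  have hΦ : P = Φ ∘ fun x i => P x (b i) :=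
    funext fun x => ContinuousLinearMap.coe_injective (b.ext fun i => by simp [Φ])
  rw [hΦ]
  exact Φ.toLinearMap.continuous_of_finiteDimensional.measurable.comp
    (measurable_pi_lambda _ fun i => hP (b i))

lemma integrable_trace_comp {α E : Type*} [MeasurableSpace α] {μ : Measure α} [IsFiniteMeasure μ]
    [NormedAddCommGroup E] [NormedSpace ℝ E] [FiniteDimensional ℝ E] {A B : α → E →L[ℝ] E}
    (hA : AEStronglyMeasurable A μ) (hB : AEStronglyMeasurable B μ) {a b : ℝ}
    (hAa : ∀ᵐ x ∂μ, ‖A x‖ ≤ a) (hBb : ∀ᵐ x ∂μ, ‖B x‖ ≤ b) :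
    Integrable (fun x => LinearMap.trace ℝ E ((A x ∘L B x : E →L[ℝ] E) : E →ₗ[ℝ] E)) μ := by
  let τ : (E →L[ℝ] E) →L[ℝ] ℝ :=
    LinearMap.toContinuousLinearMap (LinearMap.trace ℝ E ∘ₗ ContinuousLinearMap.coeLM ℝ)
  have hAB : AEStronglyMeasurable (fun x => A x ∘L B x) μ :=
    (ContinuousLinearMap.compL ℝ E E E).continuous₂.comp_aestronglyMeasurable₂ hA hB
  refine Integrable.of_bound (τ.continuous.comp_aestronglyMeasurable hAB) (‖τ‖ * (a * b)) ?_
  filter_upwards [hAa, hBb] with x hxa hxb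
  calc ‖τ (A x ∘L B x)‖ ≤ ‖τ‖ * ‖A x ∘L B x‖ := τ.le_opNorm _
    _ ≤ ‖τ‖ * (a * b) := by
      gcongr
      exact (A x).opNorm_comp_le (B x) |>.trans <|
        mul_le_mul hxa hxb (norm_nonneg _) ((norm_nonneg _).trans hxa)

section RadialField

variable {E : Type*} [NormedAddCommGroup E] [InnerProductSpace ℝ E]

def radialField (g : ℝ → ℝ) (y x : E) : E := g (‖x - y‖ ^ 2) • (x - y)

variable {g : ℝ → ℝ} {y : E}

lemma hasFDerivAt_radialField {x : E} (hg : DifferentiableAt ℝ g (‖x - y‖ ^ 2)) :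
    HasFDerivAt (radialField g y)
      (g (‖x - y‖ ^ 2) • ContinuousLinearMap.id ℝ E
        + (2 * deriv g (‖x - y‖ ^ 2)) • (innerSL ℝ (x - y)).smulRight (x - y)) x := by
  have hq : HasFDerivAt (fun z => ‖z - y‖ ^ 2) (2 • innerSL ℝ (x - y)) x :=
    ((hasFDerivAt_id x).sub_const y).norm_sq
  refine ((hg.hasDerivAt.comp_hasFDerivAt x hq).smul
    ((hasFDerivAt_id x).sub_const y)).congr_fderiv ?_
  ext v
  simp only [add_apply, smul_apply, ContinuousLinearMap.smulRight_apply, innerSL_apply_apply,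
    Function.comp_apply, smul_eq_mul, nsmul_eq_mul, Nat.cast_ofNat, id_eq, smul_smul]
  ring_nf

lemma contDiff_radialField (hg : ∀ s, 0 ≤ s → ContDiffAt ℝ 1 g s) :
    ContDiff ℝ 1 (radialField g y) :=
  contDiff_iff_contDiffAt.mpr fun x =>
    ((hg (‖x - y‖ ^ 2) (by positivity)).comp x
      (contDiff_norm_sq ℝ |>.comp (contDiff_id.sub contDiff_const)).contDiffAt).smul
      (contDiff_id.sub contDiff_const).contDiffAt

lemma hasCompactSupport_radialField [ProperSpace E] {R : ℝ} (hg : ∀ s, R ≤ s → g s = 0) :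
    HasCompactSupport (radialField g y) := by
  refine HasCompactSupport.intro (isCompact_closedBall y √R) fun x hx => ?_
  rw [mem_closedBall, not_le, dist_eq_norm] at hx
  have hR : R < ‖x - y‖ ^ 2 := (Real.sqrt_lt' ((Real.sqrt_nonneg R).trans_lt hx)).mp hx
  rw [radialField, hg _ hR.le, zero_smul]

lemma trace_comp_fderiv_radialField [FiniteDimensional ℝ E] (A : E →L[ℝ] E) {x : E}
    (hg : DifferentiableAt ℝ g (‖x - y‖ ^ 2)) :
    LinearMap.trace ℝ E ((A ∘L fderiv ℝ (radialField g y) x : E →L[ℝ] E) : E →ₗ[ℝ] E)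
      = g (‖x - y‖ ^ 2) * LinearMap.trace ℝ E (A : E →ₗ[ℝ] E)
        + 2 * deriv g (‖x - y‖ ^ 2) * ⟪x - y, A (x - y)⟫ := by
  rw [(hasFDerivAt_radialField hg).fderiv, trace_comp_smul_id_add_smulRight]

end RadialField

def monotonicityProfile (ρ σ s : ℝ) : ℝ := cutoff (s / ρ ^ 2) / (s + σ ^ 2)

namespace monotonicityProfile

variable {ρ σ s : ℝ}

lemma hasDerivAt (hs : s + σ ^ 2 ≠ 0) :
    HasDerivAt (monotonicityProfile ρ σ)
      ((deriv cutoff (s / ρ ^ 2) / ρ ^ 2 * (s + σ ^ 2) - cutoff (s / ρ ^ 2)) / (s + σ ^ 2) ^ 2)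
      s := by
  have hc : HasDerivAt (fun s => cutoff (s / ρ ^ 2)) (deriv cutoff (s / ρ ^ 2) / ρ ^ 2) s := by
    simpa [Function.comp_def, div_eq_mul_inv] using
      ((cutoff.contDiff (n := 1)).differentiable one_ne_zero _).hasDerivAt.comp s
        ((hasDerivAt_id s).div_const (ρ ^ 2))
  have h := hc.div ((hasDerivAt_id' s).add_const (σ ^ 2)) hs
  rw [mul_one] at h
  exact h

lemma contDiffAt (hs : s + σ ^ 2 ≠ 0) : ContDiffAt ℝ 1 (monotonicityProfile ρ σ) s :=
  (cutoff.contDiff.contDiffAt.comp s (contDiffAt_id.div_const _)).div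
    (contDiffAt_id.add contDiffAt_const) hs

lemma eq_zero (hρ : 0 < ρ) (hs : ρ ^ 2 / 2 ≤ s) : monotonicityProfile ρ σ s = 0 := by
  rw [monotonicityProfile, cutoff.eq_zero_of_le ((le_div_iff₀ (by positivity)).mpr (by linarith)),
    zero_div]

lemma deriv_eq_zero (hρ : 0 < ρ) (hσ : 0 < σ) (hs : ρ ^ 2 ≤ s) :
    deriv (monotonicityProfile ρ σ) s = 0 := by
  have h1 : 1 ≤ s / ρ ^ 2 := (one_le_div (by positivity)).mpr hs
  have hs₀ : 0 < s + σ ^ 2 := by have := sq_nonneg ρ; have := pow_pos hσ 2; linarith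
  rw [(hasDerivAt hs₀.ne').deriv, cutoff.eq_zero_of_le (by linarith),
    cutoff.deriv_eq_zero_of_notMem_Icc (fun h => by linarith [h.2])]
  simp

end monotonicityProfile

lemma monotonicity_integrand_bound {η η' K ρ σ a b e h D : ℝ} (hρ : 0 < ρ) (hσ : 0 < σ)
    (ha : 0 ≤ a) (hD : D = a + b ^ 2 + σ ^ 2) (hη₀ : 0 ≤ η) (hη₁ : η ≤ 1) (hK : 0 ≤ K)
    (hη' : -K ≤ η') (he : -(b * h) ≤ e) :
    2 * η * σ ^ 2 / D ^ 2 ≤ η / D * 2 + 2 * ((η' / ρ ^ 2 * D - η) / D ^ 2) * a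
      + 2 * (η / D * e) + (2 * K / ρ ^ 2 + h ^ 2 / 2) := by
  have hD₀ : 0 < D := by rw [hD]; positivity
  have hau : a / D ≤ 1 := (div_le_one hD₀).mpr (by rw [hD]; nlinarith)
  have := div_nonneg ha hD₀.le
  have : 0 ≤ e + b * h := by linarith
  have : 0 ≤ η' + K := by linarith
  have : 0 ≤ 1 - a / D := by linarith
  have : 0 ≤ 1 - η := by linarith
  rw [← sub_nonneg]
  -- `D = a + b ^ 2 + σ ^ 2` leaves `2 η b² / D²`, which absorbs the cross term `2 η e / D`.
  have key : η / D * 2 + 2 * ((η' / ρ ^ 2 * D - η) / D ^ 2) * a + 2 * (η / D * e)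
        + (2 * K / ρ ^ 2 + h ^ 2 / 2) - 2 * η * σ ^ 2 / D ^ 2
      = 2 * η * (b / D - h / 2) ^ 2 + 2 * (η / D) * (e + b * h)
        + 2 / ρ ^ 2 * ((η' + K) * (a / D)) + 2 * K / ρ ^ 2 * (1 - a / D) + (1 - η) * h ^ 2 / 2 := by
    subst hD; field_simp; ring
  rw [key]
  positivity

section MonotonicityIntegrand

variable {E : Type*} [NormedAddCommGroup E] {ρ σ : ℝ} {y x : E}

lemma indicator_ball_le_cutoff (hρ : 0 < ρ) (hσ : 0 < σ) (hσρ : σ ≤ ρ / 2) :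
    (ball y σ).indicator (fun _ => (2 * σ ^ 2)⁻¹) x
      ≤ 2 * cutoff (‖x - y‖ ^ 2 / ρ ^ 2) * σ ^ 2 / (‖x - y‖ ^ 2 + σ ^ 2) ^ 2 := by
  by_cases hx : x ∈ ball y σ
  · have hq : ‖x - y‖ ^ 2 < σ ^ 2 := by
      rw [mem_ball, dist_eq_norm] at hx
      exact pow_lt_pow_left₀ hx (norm_nonneg _) two_ne_zero
    rw [Set.indicator_of_mem hx, cutoff.eq_one_of_le, inv_eq_one_div,
      div_le_div_iff₀ (by positivity) (by positivity)]
    · nlinarith [pow_pos hσ 2, norm_nonneg (x - y)]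
    · rw [div_le_iff₀ (by positivity)]; nlinarith
  · rw [Set.indicator_of_notMem hx]
    have := cutoff.nonneg (‖x - y‖ ^ 2 / ρ ^ 2)
    positivity

variable [InnerProductSpace ℝ E] [FiniteDimensional ℝ E]

lemma indicator_ball_le_monotonicity_integrand {p : E →L[ℝ] E} (hidem : p ∘L p = p)
    (hsymm : ∀ u v, ⟪p u, v⟫ = ⟪u, p v⟫) (htrace : LinearMap.trace ℝ E (p : E →ₗ[ℝ] E) = 2)
    {h : E} (hh : p h = 0) {K : ℝ} (hK : ∀ t, |deriv cutoff t| ≤ K)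
    (hρ : 0 < ρ) (hσ : 0 < σ) (hσρ : σ ≤ ρ / 2) :
    (ball y σ).indicator (fun _ => (2 * σ ^ 2)⁻¹) x
      ≤ LinearMap.trace ℝ E
          ((p ∘L fderiv ℝ (radialField (monotonicityProfile ρ σ) y) x : E →L[ℝ] E) : E →ₗ[ℝ] E)
        + 2 * ⟪radialField (monotonicityProfile ρ σ) y x, h⟫
        + (ball y ρ).indicator (fun _ => 2 * K / ρ ^ 2 + ‖h‖ ^ 2 / 2) x := by
  have hq : 0 < ‖x - y‖ ^ 2 + σ ^ 2 := by positivity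
  have hg := monotonicityProfile.hasDerivAt (ρ := ρ) hq.ne'
  rw [trace_comp_fderiv_radialField p hg.differentiableAt, radialField, real_inner_smul_left]
  by_cases hx : x ∈ ball y ρ
  · have he : -(‖x - y - p (x - y)‖ * ‖h‖) ≤ ⟪x - y, h⟫ := by
      rw [inner_eq_inner_sub_apply hsymm hh]
      exact neg_le_of_abs_le (abs_real_inner_le_norm _ _)
    rw [Set.indicator_of_mem hx, hg.deriv, htrace, inner_apply_self_eq_norm_sq hsymm hidem]
    exact (indicator_ball_le_cutoff hρ hσ hσρ).trans <|
      monotonicity_integrand_bound (a := ‖p (x - y)‖ ^ 2) hρ hσ (sq_nonneg _)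
        (by rw [norm_sq_eq_norm_sq_apply_add hsymm hidem (x - y)]) (cutoff.nonneg _)
        (cutoff.le_one _) ((abs_nonneg _).trans (hK 0)) (neg_le_of_abs_le (hK _)) he
  · have hfar : ρ ^ 2 ≤ ‖x - y‖ ^ 2 := by
      rw [mem_ball, dist_eq_norm, not_lt] at hx
      exact pow_le_pow_left₀ hρ.le hx 2
    have hxσ : x ∉ ball y σ := fun h => hx (ball_subset_ball (by linarith) h)
    rw [Set.indicator_of_notMem hx, Set.indicator_of_notMem hxσ,
      monotonicityProfile.eq_zero hρ (by linarith [sq_nonneg ρ]),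
      monotonicityProfile.deriv_eq_zero hρ hσ hfar]
    simp

end MonotonicityIntegrand

lemma IsAdmissible.opNorm_le_one_ae {μ : Measure E3} {P : E3 → E3 →L[ℝ] E3} {H : E3 → E3}
    (adm : IsAdmissible μ P H) : ∀ᵐ x ∂μ, ‖P x‖ ≤ 1 := by
  filter_upwards [adm.proj_ae] with x ⟨hidem, hsymm, _⟩
  exact opNorm_le_one_of_comp_self hsymm hidem

lemma IsAdmissible.integrable_inner {μ : Measure E3} {P : E3 → E3 →L[ℝ] E3} {H : E3 → E3}
    (adm : IsAdmissible μ P H) {X : E3 → E3} (hX : Continuous X) (hXc : HasCompactSupport X) :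
    Integrable (fun x => ⟪X x, H x⟫) μ := by
  have := adm.finite
  obtain ⟨C, hC⟩ := hX.bounded_above_of_compact_support hXc
  refine ((adm.memL2.integrable one_le_two).norm.const_mul C).mono'
    (hX.aestronglyMeasurable.inner adm.meas_H) (Eventually.of_forall fun x => ?_)
  exact (norm_inner_le_norm _ _).trans (mul_le_mul_of_nonneg_right (hC x) (norm_nonneg _))

lemma IsAdmissible.integrable_trace_comp_fderiv {μ : Measure E3} {P : E3 → E3 →L[ℝ] E3}
    {H : E3 → E3} (adm : IsAdmissible μ P H) {X : E3 → E3} (hX : ContDiff ℝ 1 X)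
    (hXc : HasCompactSupport X) :
    Integrable (fun x => LinearMap.trace ℝ E3 ((P x ∘L fderiv ℝ X x : E3 →L[ℝ] E3) : E3 →ₗ[ℝ] E3))
      μ := by
  have := adm.finite
  have hDX := hX.continuous_fderiv one_ne_zero
  obtain ⟨C, hC⟩ := hDX.bounded_above_of_compact_support (hXc.fderiv (𝕜 := ℝ))
  exact integrable_trace_comp (measurable_of_measurable_apply adm.meas_P).aestronglyMeasurable
    hDX.aestronglyMeasurable adm.opNorm_le_one_ae (Eventually.of_forall hC)

lemma IsAdmissible.measure_ball_div_sq_le {μ : Measure E3} {P : E3 → E3 →L[ℝ] E3} {H : E3 → E3}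
    (adm : IsAdmissible μ P H) (perp : IsPerp μ P H) {K : ℝ} (hK : ∀ t, |deriv cutoff t| ≤ K)
    (y : E3) {ρ σ : ℝ} (hρ : 0 < ρ) (hσ : 0 < σ) (hσρ : σ ≤ ρ / 2) :
    (μ (ball y σ)).toReal / σ ^ 2
      ≤ 4 * K * ((μ (ball y ρ)).toReal / ρ ^ 2) + ∫ x in ball y ρ, ‖H x‖ ^ 2 ∂μ := by
  have := adm.finite
  set X := radialField (monotonicityProfile ρ σ) y
  have hX : ContDiff ℝ 1 X :=
    contDiff_radialField fun s hs => monotonicityProfile.contDiffAt (by positivity)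
  have hXc : HasCompactSupport X :=
    hasCompactSupport_radialField fun s => monotonicityProfile.eq_zero hρ
  set T := fun x => LinearMap.trace ℝ E3 ((P x ∘L fderiv ℝ X x : E3 →L[ℝ] E3) : E3 →ₗ[ℝ] E3)
  set R := (ball y ρ).indicator fun x => 2 * K / ρ ^ 2 + ‖H x‖ ^ 2 / 2
  have hT : Integrable T μ := adm.integrable_trace_comp_fderiv hX hXc
  have hXH := adm.integrable_inner hX.continuous hXc
  have hR : Integrable R μ :=
    ((integrable_const _).add ((adm.memL2.integrable_norm_pow two_ne_zero).div_const 2)).indicator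
      measurableSet_ball
  have hpt : ∀ᵐ x ∂μ, (ball y σ).indicator (fun _ => (2 * σ ^ 2)⁻¹) x
      ≤ T x + 2 * ⟪X x, H x⟫ + R x := by
    filter_upwards [adm.proj_ae, perp] with x ⟨hidem, hsymm, hrank⟩ hperp
    have htrace : LinearMap.trace ℝ E3 (P x : E3 →ₗ[ℝ] E3) = 2 := by
      rw [trace_eq_finrank_range_of_comp_self hidem, hrank, Nat.cast_ofNat]
    exact indicator_ball_le_monotonicity_integrand hidem hsymm htrace hperp hK hρ hσ hσρ
  have hfv : ∫ x, T x ∂μ + 2 * ∫ x, ⟪X x, H x⟫ ∂μ = 0 := by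
    rw [adm.first_variation X hX hXc]; ring
  have hRint : ∫ x, R x ∂μ
      = (μ (ball y ρ)).toReal * (2 * K / ρ ^ 2) + (∫ x in ball y ρ, ‖H x‖ ^ 2 ∂μ) / 2 := by
    rw [integral_indicator measurableSet_ball, integral_add (integrable_const _)
      ((adm.memL2.integrable_norm_pow two_ne_zero).restrict.div_const 2), setIntegral_const,
      integral_div, smul_eq_mul, measureReal_def]
  have hInt : Integrable (fun x => T x + 2 * ⟪X x, H x⟫) μ := hT.add (hXH.const_mul 2)
  have hmain : ∫ x, (ball y σ).indicator (fun _ => (2 * σ ^ 2)⁻¹) x ∂μ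
      ≤ ∫ x, (T x + 2 * ⟪X x, H x⟫ + R x) ∂μ :=
    integral_mono_ae ((integrable_const _).indicator measurableSet_ball) (hInt.add hR) hpt
  rw [integral_indicator_const _ measurableSet_ball, integral_add hInt hR,
    integral_add hT (hXH.const_mul 2), integral_const_mul, hfv, hRint, smul_eq_mul,
    measureReal_def] at hmain
  calc (μ (ball y σ)).toReal / σ ^ 2 = 2 * ((μ (ball y σ)).toReal * (2 * σ ^ 2)⁻¹) := by
        field_simp
    _ ≤ 2 * ((μ (ball y ρ)).toReal * (2 * K / ρ ^ 2) + (∫ x in ball y ρ, ‖H x‖ ^ 2 ∂μ) / 2) := by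
        linarith
    _ = _ := by ring

/-- Equation (1.7) of the paper. There is a universal constant `C > 0` such that
for any admissible triple with perpendicular mean curvature and any point `y` of lower density
at least `π`, one has `π ≤ C (μ(B_ρ(y))/ρ² + ∫_{B_ρ(y)} |H|² dμ)` for all `ρ > 0`. -/
theorem density_lower_bound :
    ∃ C > (0 : ℝ), ∀ (μ : Measure E3) (P : E3 → E3 →L[ℝ] E3) (H : E3 → E3),
      IsAdmissible μ P H → IsPerp μ P H →
      ∀ y : E3,
        Real.pi ≤ Filter.liminf (fun σ : ℝ => (μ (ball y σ)).toReal / σ ^ 2)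
          (nhdsWithin 0 (Set.Ioi 0)) →
        ∀ ρ > (0 : ℝ),
          Real.pi ≤ C * ((μ (ball y ρ)).toReal / ρ ^ 2 + ∫ x in ball y ρ, ‖H x‖ ^ 2 ∂μ) := by
  obtain ⟨K, hK⟩ := cutoff.exists_abs_deriv_le
  have hK₀ : 0 ≤ K := (abs_nonneg _).trans (hK 0)
  refine ⟨4 * K + 1, by positivity, fun μ P H adm perp y hy ρ hρ => ?_⟩
  set m := (μ (ball y ρ)).toReal / ρ ^ 2
  set W := ∫ x in ball y ρ, ‖H x‖ ^ 2 ∂μ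
  have hm : 0 ≤ m := by positivity
  have hW : 0 ≤ W := setIntegral_nonneg measurableSet_ball fun x _ => sq_nonneg _
  have hlim : Filter.liminf (fun σ : ℝ => (μ (ball y σ)).toReal / σ ^ 2) (nhdsWithin 0 (Set.Ioi 0))
      ≤ 4 * K * m + W := by
    refine liminf_le_of_frequently_le (Eventually.frequently ?_)
      (isBoundedUnder_of ⟨0, fun σ => by positivity⟩)
    filter_upwards [Ioo_mem_nhdsGT (half_pos hρ)] with σ hσ
    exact adm.measure_ball_div_sq_le perp hK y hρ hσ.1 hσ.2.le
  nlinarith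

end
end

section
/- There exists a constant C > 0, independent of all the data, with the following property. Let (μ, P, H) be an admissible triple in ℝ³ with μ ≠ 0, with H perpendicular, whose support supp μ is compact and connected, and such that liminf_{σ→0} μ(B_σ(y))/σ² ≥ π for every y ∈ supp μ. Then diam(supp μ) ≤ C √( μ(ℝ³) · ∫ |H|² dμ ). -/
open MeasureTheory Metric Filter
open scoped RealInnerProductSpace ENNReal

noncomputable section

/-!
Simon's monotonicity argument, with approximate tangent planes in place of a smooth surface.
Testing the first variation identity with `X(x) = φ(|x - y|²) (x - y)`, where
`φ(t) = 1/(t + σ²) - 3/ρ²` near `y` and `φ` is cut off (in a `C¹` way) before `|x - y| = ρ`, and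
absorbing the curvature term by Young's inequality (`H` is normal, so it only meets the normal
part of `x - y`, which the divergence of `X` controls), gives for `0 < σ ≤ ρ`
  `μ(B_σ(y))/σ² ≤ 12 μ(B_ρ(y))/ρ² + ∫_{B_ρ(y)} |H|²`.
With the density bound at `σ → 0`, every `z ∈ supp μ` and `r > 0` satisfy
`π ≤ 12 μ(B_r(z))/r² + ∫_{B_r(z)} |H|²`. Between two points of the connected support at distance
`d` there are `⌊d/2r⌋ + 1` disjoint such balls; summing gives `d π ≤ 24 μ(ℝ³)/r + 2 r W` with
`W = ∫ |H|²`, and optimising in `r` gives `d π ≤ 4 √(12 μ(ℝ³) W)`.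
-/

open Set Function

lemma hasDerivAt_max_zero_sq (s : ℝ) : HasDerivAt (fun t : ℝ => max t 0 ^ 2) (2 * max s 0) s := by
  rcases lt_trichotomy s 0 with hs | rfl | hs
  · rw [max_eq_right hs.le, mul_zero]
    refine (hasDerivAt_const s (0 : ℝ)).congr_of_eventuallyEq ?_
    filter_upwards [Iio_mem_nhds hs] with t (ht : t < 0)
    simp [ht.le]
  · have hleft : HasDerivWithinAt (fun t : ℝ => max t 0 ^ 2) 0 (Iic 0) 0 :=
      (hasDerivWithinAt_const 0 _ (0 : ℝ)).congr (fun t (ht : t ≤ 0) => by simp [ht]) (by simp)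
    have hright : HasDerivWithinAt (fun t : ℝ => max t 0 ^ 2) 0 (Ici 0) 0 :=
      ((hasDerivAt_pow 2 (0 : ℝ)).hasDerivWithinAt.congr (fun t (ht : 0 ≤ t) => by simp [ht])
        (by simp)).congr_deriv (by simp)
    simpa using (hleft.union hright).hasDerivAt (by simp [Iic_union_Ici])
  · rw [max_eq_left hs.le]
    refine ((hasDerivAt_pow 2 s).congr_of_eventuallyEq ?_).congr_deriv (by ring)
    filter_upwards [Ioi_mem_nhds hs] with t (ht : 0 < t)
    simp [ht.le]

def ramp (v : ℝ) : ℝ := max (v - 2) 0 - max (v - 4) 0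

def rampAntideriv (v : ℝ) : ℝ := (max (v - 2) 0 ^ 2 - max (v - 4) 0 ^ 2) / 2

lemma hasDerivAt_rampAntideriv (v : ℝ) : HasDerivAt rampAntideriv (ramp v) v := by
  have h2 := (hasDerivAt_max_zero_sq (v - 2)).comp v ((hasDerivAt_id v).sub_const 2)
  have h4 := (hasDerivAt_max_zero_sq (v - 4)).comp v ((hasDerivAt_id v).sub_const 4)
  refine ((h2.sub h4).div_const 2).congr_deriv ?_
  rw [ramp]
  ring

lemma continuous_rampAntideriv : Continuous rampAntideriv := by
  unfold rampAntideriv; fun_prop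

lemma continuous_ramp : Continuous ramp := by
  unfold ramp; fun_prop

lemma ramp_of_le_two {v : ℝ} (hv : v ≤ 2) : ramp v = 0 := by
  simp [ramp, hv, hv.trans (by norm_num : (2 : ℝ) ≤ 4)]

lemma rampAntideriv_of_le_two {v : ℝ} (hv : v ≤ 2) : rampAntideriv v = 0 := by
  simp [rampAntideriv, hv, hv.trans (by norm_num : (2 : ℝ) ≤ 4)]

lemma ramp_cases (v : ℝ) :
    (v ≤ 2 ∧ ramp v = 0 ∧ rampAntideriv v = 0) ∨
    (2 ≤ v ∧ v ≤ 4 ∧ ramp v = v - 2 ∧ rampAntideriv v = (v - 2) ^ 2 / 2) ∨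
    (4 ≤ v ∧ ramp v = 2 ∧ rampAntideriv v = 2 * v - 6) := by
  rcases le_total v 2 with h | h
  · exact .inl ⟨h, ramp_of_le_two h, rampAntideriv_of_le_two h⟩
  rcases le_total v 4 with h' | h'
  · refine .inr (.inl ⟨h, h', ?_, ?_⟩) <;> simp [ramp, rampAntideriv, h, h']
  · refine .inr (.inr ⟨h', ?_, ?_⟩) <;>
      simp only [ramp, rampAntideriv, sub_nonneg, h, h', max_eq_left] <;> ring

lemma ramp_nonneg (v : ℝ) : 0 ≤ ramp v := by
  rcases ramp_cases v with ⟨-, h, -⟩ | ⟨hv, -, h, -⟩ | ⟨-, h, -⟩ <;> rw [h] <;> linarith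

lemma ramp_le_two (v : ℝ) : ramp v ≤ 2 := by
  rcases ramp_cases v with ⟨-, h, -⟩ | ⟨-, hv, h, -⟩ | ⟨-, h, -⟩ <;> rw [h] <;> linarith

lemma two_mul_sub_three_le_rampAntideriv (v : ℝ) : 2 * (v - 3) ≤ rampAntideriv v := by
  rcases ramp_cases v with ⟨hv, -, h⟩ | ⟨-, -, -, h⟩ | ⟨-, -, h⟩ <;> rw [h] <;>
    nlinarith [sq_nonneg (v - 4)]

lemma rampAntideriv_sq_le (v : ℝ) : rampAntideriv v ^ 2 ≤ 2 * ramp v * v ^ 2 := by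
  rcases ramp_cases v with ⟨-, h, h'⟩ | ⟨hv, hv', h, h'⟩ | ⟨hv, h, h'⟩ <;> rw [h, h']
  · simp
  · have : (v - 2) ^ 3 ≤ 2 ^ 3 := pow_le_pow_left₀ (by linarith) (by linarith) 3
    nlinarith [mul_nonneg (sub_nonneg.2 hv) (sq_nonneg v)]
  · nlinarith

-- `1/(t + σ²) - 3/ρ²` while `t + σ² ≤ ρ²/4`, and `0` once `t + σ² ≥ ρ²/2`.
def radialCoeff (σ ρ t : ℝ) : ℝ := rampAntideriv (ρ ^ 2 / (t + σ ^ 2)) / (2 * ρ ^ 2)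

def radialSlope (σ ρ t : ℝ) : ℝ := ramp (ρ ^ 2 / (t + σ ^ 2)) / (t + σ ^ 2) ^ 2

-- The divergence of `testField` along a plane containing `x - y`.
def radialDiv (σ ρ t : ℝ) : ℝ := 2 * radialCoeff σ ρ t - radialSlope σ ρ t * t

section Radial

variable {σ ρ t : ℝ}

lemma hasDerivAt_radialCoeff (hρ : ρ ≠ 0) (ht : t + σ ^ 2 ≠ 0) :
    HasDerivAt (radialCoeff σ ρ) (-radialSlope σ ρ t / 2) t := by
  have hv := (hasDerivAt_const t (ρ ^ 2)).div ((hasDerivAt_id t).add_const (σ ^ 2)) ht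
  refine ((hasDerivAt_rampAntideriv _).comp t hv |>.div_const _).congr_deriv ?_
  simp only [radialSlope, Pi.div_apply, id]
  field_simp
  ring

lemma sq_div_add_sq_le_two (h : ρ ^ 2 ≤ t) : ρ ^ 2 / (t + σ ^ 2) ≤ 2 :=
  (div_le_one_of_le₀ (by linarith [sq_nonneg σ]) (by linarith [sq_nonneg σ, sq_nonneg ρ])).trans
    one_le_two

lemma radialCoeff_eq_zero (h : ρ ^ 2 ≤ t) : radialCoeff σ ρ t = 0 := by
  rw [radialCoeff, rampAntideriv_of_le_two (sq_div_add_sq_le_two h), zero_div]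

lemma radialSlope_eq_zero (h : ρ ^ 2 ≤ t) : radialSlope σ ρ t = 0 := by
  rw [radialSlope, ramp_of_le_two (sq_div_add_sq_le_two h), zero_div]

lemma radialSlope_nonneg : 0 ≤ radialSlope σ ρ t :=
  div_nonneg (ramp_nonneg _) (sq_nonneg _)

lemma two_mul_radialCoeff_sq_le_radialSlope (hρ : ρ ≠ 0) :
    2 * radialCoeff σ ρ t ^ 2 ≤ radialSlope σ ρ t := by
  set v := ρ ^ 2 / (t + σ ^ 2) with hv
  calc 2 * radialCoeff σ ρ t ^ 2 = rampAntideriv v ^ 2 / (2 * ρ ^ 4) := by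
        rw [radialCoeff]; ring
    _ ≤ 2 * ramp v * v ^ 2 / (2 * ρ ^ 4) := by gcongr; exact rampAntideriv_sq_le v
    _ = radialSlope σ ρ t := by rw [radialSlope, hv]; field_simp

lemma radialDiv_eq_zero (h : ρ ^ 2 ≤ t) : radialDiv σ ρ t = 0 := by
  rw [radialDiv, radialCoeff_eq_zero h, radialSlope_eq_zero h]
  ring

lemma sub_le_radialDiv (hσ : σ ≠ 0) (ht : 0 ≤ t) (hρ : ρ ≠ 0) :
    2 * σ ^ 2 / (t + σ ^ 2) ^ 2 - 6 / ρ ^ 2 ≤ radialDiv σ ρ t := by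
  have hd : 0 < t + σ ^ 2 := by positivity
  set v := ρ ^ 2 / (t + σ ^ 2) with hv
  have hcoeff : 2 * (v - 3) / ρ ^ 2 ≤ 2 * radialCoeff σ ρ t :=
    calc 2 * (v - 3) / ρ ^ 2 ≤ rampAntideriv v / ρ ^ 2 := by
          gcongr; exact two_mul_sub_three_le_rampAntideriv v
      _ = 2 * radialCoeff σ ρ t := by rw [radialCoeff, hv]; field_simp
  have hslope : radialSlope σ ρ t * t ≤ 2 * t / (t + σ ^ 2) ^ 2 := by
    rw [radialSlope, div_mul_eq_mul_div]
    gcongr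
    exact ramp_le_two v
  have hsplit : 2 * (v - 3) / ρ ^ 2 - 2 * t / (t + σ ^ 2) ^ 2
      = 2 * σ ^ 2 / (t + σ ^ 2) ^ 2 - 6 / ρ ^ 2 := by
    rw [hv]
    field_simp
    ring
  rw [radialDiv]
  linarith

end Radial

section RadialComp

variable {E : Type*} [SeminormedAddCommGroup E] (y : E) {σ : ℝ} (ρ : ℝ)

lemma continuous_radialCoeff_norm_sub_sq (hσ : σ ≠ 0) :
    Continuous fun x : E => radialCoeff σ ρ (‖x - y‖ ^ 2) := by
  have := continuous_rampAntideriv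
  unfold radialCoeff; fun_prop (disch := intro; positivity)

lemma continuous_radialSlope_norm_sub_sq (hσ : σ ≠ 0) :
    Continuous fun x : E => radialSlope σ ρ (‖x - y‖ ^ 2) := by
  have := continuous_ramp
  unfold radialSlope; fun_prop (disch := intro; positivity)

lemma hasCompactSupport_comp_norm_sub_sq [ProperSpace E] {g : ℝ → ℝ}
    (hg : ∀ t, ρ ^ 2 ≤ t → g t = 0) : HasCompactSupport fun x : E => g (‖x - y‖ ^ 2) := by
  refine HasCompactSupport.intro (isCompact_closedBall y |ρ|) fun x hx => hg _ ?_
  rw [mem_closedBall, not_le, dist_eq_norm] at hx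
  rw [← sq_abs ρ]
  exact pow_le_pow_left₀ (abs_nonneg ρ) hx.le 2

end RadialComp

section TestField

variable {E : Type*} [NormedAddCommGroup E] [InnerProductSpace ℝ E] (y : E) {σ ρ : ℝ}

def testField (σ ρ : ℝ) (x : E) : E := radialCoeff σ ρ (‖x - y‖ ^ 2) • (x - y)

lemma hasFDerivAt_testField (hσ : σ ≠ 0) (hρ : ρ ≠ 0) (x : E) :
    HasFDerivAt (testField y σ ρ)
      (radialCoeff σ ρ (‖x - y‖ ^ 2) • ContinuousLinearMap.id ℝ E
        - (radialSlope σ ρ (‖x - y‖ ^ 2) • innerSL ℝ (x - y)).smulRight (x - y)) x := by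
  have hsub := (hasFDerivAt_id (𝕜 := ℝ) x).sub_const y
  have hcoeff := (hasDerivAt_radialCoeff hρ (by positivity : ‖x - y‖ ^ 2 + σ ^ 2 ≠ 0))
    |>.comp_hasFDerivAt x hsub.norm_sq
  refine (hcoeff.smul hsub).congr_fderiv ?_
  ext v
  simp only [comp_apply, id_eq, add_apply, sub_apply, smul_apply, ContinuousLinearMap.comp_id,
    ContinuousLinearMap.id_apply, ContinuousLinearMap.smulRight_apply, innerSL_apply_apply,
    smul_eq_mul, nsmul_eq_mul, Nat.cast_ofNat, inner_sub_left]
  module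

lemma contDiff_testField (hσ : σ ≠ 0) (hρ : ρ ≠ 0) : ContDiff ℝ 1 (testField y σ ρ) := by
  rw [contDiff_one_iff_fderiv]
  refine ⟨fun x => (hasFDerivAt_testField y hσ hρ x).differentiableAt, ?_⟩
  rw [funext fun x => (hasFDerivAt_testField y hσ hρ x).fderiv]
  have := continuous_radialCoeff_norm_sub_sq y ρ hσ
  have := continuous_radialSlope_norm_sub_sq y ρ hσ
  fun_prop

lemma testField_eq_zero {x : E} (hx : ρ ^ 2 ≤ ‖x - y‖ ^ 2) : testField y σ ρ x = 0 := by
  rw [testField, radialCoeff_eq_zero hx, zero_smul]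

lemma hasCompactSupport_testField [ProperSpace E] : HasCompactSupport (testField y σ ρ) :=
  (hasCompactSupport_comp_norm_sub_sq y ρ fun _ => radialCoeff_eq_zero).smul_right

end TestField

section Projection

variable {E : Type*} [NormedAddCommGroup E] [InnerProductSpace ℝ E] {P : E →L[ℝ] E}

lemma trace_comp_smul_id_sub_smulRight [FiniteDimensional ℝ E] (hP : IsIdempotentElem P)
    (a : ℝ) (L : E →L[ℝ] ℝ) (z : E) :
    LinearMap.trace ℝ E (P.comp (a • ContinuousLinearMap.id ℝ E - L.smulRight z) : E →ₗ[ℝ] E)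
      = a * Module.finrank ℝ (LinearMap.range (P : E →ₗ[ℝ] E)) - L (P z) := by
  have hcomp : (P.comp (a • ContinuousLinearMap.id ℝ E - L.smulRight z) : E →ₗ[ℝ] E)
      = a • (P : E →ₗ[ℝ] E) - (L : E →ₗ[ℝ] ℝ).smulRight (P z) := by
    ext v; simp
  have hproj : LinearMap.IsProj (LinearMap.range (P : E →ₗ[ℝ] E)) (P : E →ₗ[ℝ] E) :=
    LinearMap.IsIdempotentElem.isProj_range _ (congrArg ((↑) : (E →L[ℝ] E) → E →ₗ[ℝ] E) hP)
  rw [hcomp, map_sub, map_smul, hproj.trace, LinearMap.trace_smulRight, smul_eq_mul]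
  rfl

variable (hsym : ∀ u v : E, ⟪P u, v⟫ = ⟪u, P v⟫)
include hsym

lemma inner_self_apply_eq_norm_sq (hP : IsIdempotentElem P) (z : E) : ⟪z, P z⟫ = ‖P z‖ ^ 2 := by
  rw [← real_inner_self_eq_norm_sq, hsym, show P (P z) = P z from congr($hP z)]

lemma norm_sub_apply_sq (hP : IsIdempotentElem P) (z : E) :
    ‖z - P z‖ ^ 2 = ‖z‖ ^ 2 - ‖P z‖ ^ 2 := by
  rw [@norm_sub_sq_real, inner_self_apply_eq_norm_sq hsym hP]
  ring

lemma inner_sub_apply_of_apply_eq_zero {h : E} (hh : P h = 0) (z : E) : ⟪z - P z, h⟫ = ⟪z, h⟫ := by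
  rw [inner_sub_left, hsym, hh, inner_zero_right, sub_zero]

lemma neg_two_mul_inner_sub_le {h : E} (hh : P h = 0) {F c : ℝ} (hFc : 2 * F ^ 2 ≤ c) (z : E) :
    -(2 * F * ⟪z, h⟫) - c * ‖z - P z‖ ^ 2 ≤ ‖h‖ ^ 2 / 2 := by
  rw [← inner_sub_apply_of_apply_eq_zero hsym hh z]
  have hsq := norm_add_sq_real h ((2 * F) • (z - P z))
  rw [inner_smul_right, norm_smul, mul_pow, Real.norm_eq_abs, sq_abs, real_inner_comm] at hsq
  nlinarith [norm_nonneg (h + (2 * F) • (z - P z)), sq_nonneg ‖z - P z‖]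

variable (y : E) {σ ρ : ℝ}

lemma trace_comp_fderiv_testField [FiniteDimensional ℝ E] (hP : IsIdempotentElem P)
    (hrank : Module.finrank ℝ (LinearMap.range (P : E →ₗ[ℝ] E)) = 2) (hσ : σ ≠ 0) (hρ : ρ ≠ 0)
    (x : E) :
    LinearMap.trace ℝ E (P.comp (fderiv ℝ (testField y σ ρ) x) : E →ₗ[ℝ] E)
      = radialDiv σ ρ (‖x - y‖ ^ 2)
        + radialSlope σ ρ (‖x - y‖ ^ 2) * ‖(x - y) - P (x - y)‖ ^ 2 := by
  rw [(hasFDerivAt_testField y hσ hρ x).fderiv, trace_comp_smul_id_sub_smulRight hP, hrank,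
    norm_sub_apply_sq hsym hP, ← inner_self_apply_eq_norm_sq hsym hP, radialDiv]
  simp only [FunLike.coe_smul, Pi.smul_apply, innerSL_apply_apply, smul_eq_mul]
  push_cast
  ring

lemma neg_two_mul_inner_testField_sub_le {h : E} (hh : P h = 0) (hρ : 0 < ρ) (x : E) :
    -(2 * ⟪testField y σ ρ x, h⟫)
        - radialSlope σ ρ (‖x - y‖ ^ 2) * ‖(x - y) - P (x - y)‖ ^ 2
      ≤ (ball y ρ).indicator (fun _ => ‖h‖ ^ 2 / 2) x := by
  by_cases hx : x ∈ ball y ρ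
  · rw [indicator_of_mem hx, testField, real_inner_smul_left, ← mul_assoc]
    exact neg_two_mul_inner_sub_le hsym hh (two_mul_radialCoeff_sq_le_radialSlope hρ.ne') _
  · have hfar : ρ ^ 2 ≤ ‖x - y‖ ^ 2 := by
      rw [mem_ball, not_lt, dist_eq_norm] at hx
      exact pow_le_pow_left₀ hρ.le hx 2
    simp [testField_eq_zero y hfar, radialSlope_eq_zero hfar, indicator_of_notMem hx]

end Projection

lemma measurable_clm_apply_of_forall {α E F : Type*} [MeasurableSpace α]
    [NormedAddCommGroup E] [NormedSpace ℝ E] [FiniteDimensional ℝ E]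
    [MeasurableSpace E] [OpensMeasurableSpace E] [NormedAddCommGroup F] [NormedSpace ℝ F]
    [MeasurableSpace F] [BorelSpace F] [SecondCountableTopology F]
    {P : α → E →L[ℝ] F} (hP : ∀ v, Measurable fun x => P x v) {f : α → E} (hf : Measurable f) :
    Measurable fun x => P x (f x) := by
  let b := Module.finBasis ℝ E
  have hsum : (fun x => P x (f x)) = fun x => ∑ i, b.coord i (f x) • P x (b i) := by
    funext x
    conv_lhs => rw [← b.sum_repr (f x), map_sum]
    simp only [map_smul, Module.Basis.coord_apply]
  rw [hsum]
  exact Finset.measurable_sum _ fun i _ =>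
    ((b.coord i).continuous_of_finiteDimensional.measurable.comp hf).smul (hP _)

lemma integrable_inner_of_hasCompactSupport {α E : Type*} [TopologicalSpace α]
    [MeasurableSpace α] [OpensMeasurableSpace α] [NormedAddCommGroup E] [InnerProductSpace ℝ E]
    [SecondCountableTopologyEither α E] {μ : Measure α} {X H : α → E}
    (hX : Continuous X) (hXc : HasCompactSupport X) (hH : Integrable H μ) :
    Integrable (fun x => ⟪X x, H x⟫) μ := by
  obtain ⟨C, hC⟩ := hX.bounded_above_of_compact_support hXc
  refine (hH.norm.const_mul C).mono' (hX.aestronglyMeasurable.inner hH.1)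
    (Eventually.of_forall fun x => ?_)
  calc ‖⟪X x, H x⟫‖ ≤ ‖X x‖ * ‖H x‖ := norm_inner_le_norm _ _
    _ ≤ C * ‖H x‖ := by gcongr; exact hC x

section Monotonicity

variable {E : Type*} [NormedAddCommGroup E] (y : E) {σ ρ : ℝ}

lemma indicator_sub_indicator_le_radialDiv (hσ : 0 < σ) (hσρ : σ ≤ ρ) (x : E) :
    (ball y σ).indicator (fun _ => 1 / (2 * σ ^ 2)) x - (ball y ρ).indicator (fun _ => 6 / ρ ^ 2) x
      ≤ radialDiv σ ρ (‖x - y‖ ^ 2) := by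
  have hρ : 0 < ρ := hσ.trans_le hσρ
  by_cases hxρ : x ∈ ball y ρ
  swap
  · have hxσ : x ∉ ball y σ := fun h => hxρ (ball_subset_ball hσρ h)
    rw [indicator_of_notMem hxρ, indicator_of_notMem hxσ, radialDiv_eq_zero, sub_zero]
    rw [mem_ball, not_lt, dist_eq_norm] at hxρ
    exact pow_le_pow_left₀ hρ.le hxρ 2
  rw [indicator_of_mem hxρ]
  refine le_trans ?_ (sub_le_radialDiv hσ.ne' (sq_nonneg _) hρ.ne')
  gcongr
  by_cases hxσ : x ∈ ball y σ
  · rw [indicator_of_mem hxσ, mem_ball, dist_eq_norm] at *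
    have ht : ‖x - y‖ ^ 2 < σ ^ 2 := pow_lt_pow_left₀ hxσ (norm_nonneg _) two_ne_zero
    rw [div_le_div_iff₀ (by positivity) (by positivity)]
    nlinarith [sq_nonneg ‖x - y‖]
  · rw [indicator_of_notMem hxσ]
    positivity

lemma integrable_radialDiv_norm_sub_sq [ProperSpace E] [MeasurableSpace E] [BorelSpace E]
    (μ : Measure E) [IsFiniteMeasureOnCompacts μ] (hσ : σ ≠ 0) :
    Integrable (fun x => radialDiv σ ρ (‖x - y‖ ^ 2)) μ := by
  refine Continuous.integrable_of_hasCompactSupport ?_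
    (hasCompactSupport_comp_norm_sub_sq y ρ fun t => radialDiv_eq_zero)
  have := continuous_radialCoeff_norm_sub_sq y ρ hσ
  have := continuous_radialSlope_norm_sub_sq y ρ hσ
  unfold radialDiv
  fun_prop

lemma measureReal_ball_div_sub_le_integral_radialDiv [ProperSpace E] [MeasurableSpace E]
    [BorelSpace E] (μ : Measure E) [IsFiniteMeasure μ] (hσ : 0 < σ) (hσρ : σ ≤ ρ) :
    μ.real (ball y σ) / (2 * σ ^ 2) - 6 * μ.real (ball y ρ) / ρ ^ 2
      ≤ ∫ x, radialDiv σ ρ (‖x - y‖ ^ 2) ∂μ := by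
  have hint := fun r (c : ℝ) =>
    (integrable_const c).indicator (μ := μ) (measurableSet_ball (x := y) (ε := r))
  have := integral_mono ((hint σ _).sub (hint ρ _)) (integrable_radialDiv_norm_sub_sq y μ hσ.ne')
    (indicator_sub_indicator_le_radialDiv y hσ hσρ)
  rw [integral_sub' (hint σ _) (hint ρ _), integral_indicator_const _ measurableSet_ball,
    integral_indicator_const _ measurableSet_ball] at this
  refine le_of_eq_of_le ?_ this
  simp only [smul_eq_mul]
  ring

end Monotonicity

section Admissible

variable {μ : Measure E3} {P : E3 → E3 →L[ℝ] E3} {H : E3 → E3} (adm : IsAdmissible μ P H)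
  (y : E3) {σ ρ : ℝ}
include adm

lemma integrable_radialSlope_mul_norm_sub_apply_sq (hσ : σ ≠ 0) :
    Integrable (fun x => radialSlope σ ρ (‖x - y‖ ^ 2) * ‖(x - y) - P x (x - y)‖ ^ 2) μ := by
  have := adm.finite
  have hc := continuous_radialSlope_norm_sub_sq y ρ hσ
  have hbound : Integrable (fun x => radialSlope σ ρ (‖x - y‖ ^ 2) * ‖x - y‖ ^ 2) μ :=
    Continuous.integrable_of_hasCompactSupport (by fun_prop)
      (hasCompactSupport_comp_norm_sub_sq y ρ (g := fun t => radialSlope σ ρ t * t)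
        fun t ht => by rw [radialSlope_eq_zero ht, zero_mul])
  have hPmeas := measurable_clm_apply_of_forall adm.meas_P (measurable_id.sub_const y)
  refine hbound.mono' (hc.measurable.mul
    (((measurable_id.sub_const y).sub hPmeas).norm.pow_const 2)).aestronglyMeasurable ?_
  filter_upwards [adm.proj_ae] with x ⟨hidem, hsym, _⟩
  rw [Real.norm_of_nonneg (mul_nonneg radialSlope_nonneg (sq_nonneg _)),
    norm_sub_apply_sq hsym hidem]
  exact mul_le_mul_of_nonneg_left (sub_le_self _ (sq_nonneg _)) radialSlope_nonneg

lemma integral_radialDiv_le (hperp : IsPerp μ P H) (hσ : 0 < σ) (hρ : 0 < ρ) :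
    ∫ x, radialDiv σ ρ (‖x - y‖ ^ 2) ∂μ ≤ (∫ x in ball y ρ, ‖H x‖ ^ 2 ∂μ) / 2 := by
  have := adm.finite
  set X := testField y σ ρ
  set ψ := fun x => radialSlope σ ρ (‖x - y‖ ^ 2) * ‖(x - y) - P x (x - y)‖ ^ 2
  have hψ : Integrable ψ μ := integrable_radialSlope_mul_norm_sub_apply_sq adm y hσ.ne'
  have hXH : Integrable (fun x => -(2 * ⟪X x, H x⟫)) μ :=
    ((integrable_inner_of_hasCompactSupport (contDiff_testField y hσ.ne' hρ.ne').continuous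
      (hasCompactSupport_testField y) (adm.memL2.integrable one_le_two)).const_mul 2).neg
  have hfirst_variation :
      ∫ x, radialDiv σ ρ (‖x - y‖ ^ 2) ∂μ + ∫ x, ψ x ∂μ = -2 * ∫ x, ⟪X x, H x⟫ ∂μ := by
    rw [← integral_add (integrable_radialDiv_norm_sub_sq y μ hσ.ne') hψ,
      ← adm.first_variation X (contDiff_testField y hσ.ne' hρ.ne') (hasCompactSupport_testField y)]
    refine integral_congr_ae ?_
    filter_upwards [adm.proj_ae] with x ⟨hidem, hsym, hrank⟩
    exact (trace_comp_fderiv_testField hsym y hidem hrank hσ.ne' hρ.ne' x).symm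
  have hH2 := (adm.memL2.integrable_norm_pow two_ne_zero).div_const 2
  calc ∫ x, radialDiv σ ρ (‖x - y‖ ^ 2) ∂μ = ∫ x, (-(2 * ⟪X x, H x⟫) - ψ x) ∂μ := by
        rw [integral_sub hXH hψ, integral_neg, integral_const_mul]
        linarith
    _ ≤ ∫ x, (ball y ρ).indicator (fun x => ‖H x‖ ^ 2 / 2) x ∂μ := by
        refine integral_mono_ae (hXH.sub hψ) (hH2.indicator measurableSet_ball) ?_
        filter_upwards [adm.proj_ae, hperp] with x ⟨_, hsym, _⟩ hPH
        exact neg_two_mul_inner_testField_sub_le hsym y hPH hρ x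
    _ = (∫ x in ball y ρ, ‖H x‖ ^ 2 ∂μ) / 2 := by
        rw [integral_indicator measurableSet_ball, integral_div]

lemma measureReal_ball_div_sq_le (hperp : IsPerp μ P H) (hσ : 0 < σ) (hσρ : σ ≤ ρ) :
    μ.real (ball y σ) / σ ^ 2
      ≤ 12 * μ.real (ball y ρ) / ρ ^ 2 + ∫ x in ball y ρ, ‖H x‖ ^ 2 ∂μ := by
  have := adm.finite
  have hlower := measureReal_ball_div_sub_le_integral_radialDiv y μ hσ hσρ
  have hupper := integral_radialDiv_le adm y hperp hσ (hσ.trans_le hσρ)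
  have hσ2 : μ.real (ball y σ) / σ ^ 2 = 2 * (μ.real (ball y σ) / (2 * σ ^ 2)) := by
    field_simp
  have hρ2 : 12 * μ.real (ball y ρ) / ρ ^ 2 = 2 * (6 * μ.real (ball y ρ) / ρ ^ 2) := by ring
  linarith

lemma pi_le_measureReal_ball_div_sq_add (hperp : IsPerp μ P H)
    (hy : Real.pi ≤ liminf (fun σ : ℝ => μ.real (ball y σ) / σ ^ 2) (nhdsWithin 0 (Ioi 0)))
    (hρ : 0 < ρ) :
    Real.pi ≤ 12 * μ.real (ball y ρ) / ρ ^ 2 + ∫ x in ball y ρ, ‖H x‖ ^ 2 ∂μ := by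
  refine hy.trans (liminf_le_of_frequently_le ?_ (isBoundedUnder_of ⟨0, fun σ => by positivity⟩))
  refine Eventually.frequently ?_
  filter_upwards [Ioc_mem_nhdsGT hρ] with σ hσ
  exact measureReal_ball_div_sq_le adm y hperp hσ.1 hσ.2

end Admissible

lemma exists_pairwise_disjoint_balls_of_isPreconnected {α : Type*} [MetricSpace α] {K : Set α}
    (hK : IsPreconnected K) {x₁ x₂ : α} (h₁ : x₁ ∈ K) (h₂ : x₂ ∈ K) {r : ℝ} (hr : 0 ≤ r) {n : ℕ}
    (hn : 2 * r * n ≤ dist x₁ x₂) :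
    ∃ z : Fin (n + 1) → α, (∀ k, z k ∈ K) ∧ Pairwise (Disjoint on fun k => ball (z k) r) := by
  have hivt : ∀ k : Fin (n + 1), ∃ z ∈ K, dist z x₁ = 2 * r * k := by
    intro k
    refine hK.intermediate_value h₁ h₂ (continuous_id.dist continuous_const).continuousOn ⟨?_, ?_⟩
    · simp only [id, dist_self]; positivity
    · rw [dist_comm]
      exact le_trans (by gcongr; exact_mod_cast k.is_le) hn
  choose z hzK hzdist using hivt
  refine ⟨z, hzK, fun j k hjk => ball_disjoint_ball ?_⟩
  have hjk' : 1 ≤ |(j : ℝ) - k| := by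
    have h : ((j : ℕ) : ℤ) - k ≠ 0 := sub_ne_zero.2 (by exact_mod_cast Fin.val_ne_of_ne hjk)
    exact_mod_cast Int.one_le_abs h
  calc r + r = 2 * r * 1 := by ring
    _ ≤ 2 * r * |(j : ℝ) - k| := by gcongr
    _ = |dist (z j) x₁ - dist (z k) x₁| := by
        rw [hzdist, hzdist, ← mul_sub, abs_mul, abs_of_nonneg (by positivity : (0 : ℝ) ≤ 2 * r)]
    _ ≤ dist (z j) (z k) := abs_dist_sub_le _ _ _

lemma sum_mul_measureReal_add_setIntegral_le {α ι : Type*} [MeasurableSpace α] [Fintype ι]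
    {μ : Measure α} [IsFiniteMeasure μ] {U : ι → Set α} (hU : ∀ i, MeasurableSet (U i))
    (hd : Pairwise (Disjoint on U)) {f : α → ℝ} (hf : Integrable f μ) (hf0 : 0 ≤ f) {c : ℝ}
    (hc : 0 ≤ c) :
    ∑ i, (c * μ.real (U i) + ∫ x in U i, f x ∂μ) ≤ c * μ.real univ + ∫ x, f x ∂μ := by
  rw [Finset.sum_add_distrib, ← Finset.mul_sum, ← measureReal_iUnion_fintype hd hU,
    ← integral_iUnion_fintype hU hd fun i => hf.integrableOn]
  exact add_le_add (mul_le_mul_of_nonneg_left (measureReal_mono (subset_univ _)) hc)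
    (setIntegral_le_integral hf (Eventually.of_forall hf0))

lemma le_two_sqrt_mul_of_forall_le_div_add_mul {a b c : ℝ} (hb : 0 ≤ b) (hc : 0 ≤ c)
    (h : ∀ r > 0, a ≤ b / r + c * r) : a ≤ 2 * √(b * c) := by
  have hs := Real.sqrt_nonneg b
  have ht := Real.sqrt_nonneg c
  -- `r = (√b + δ) / (√c + δ)` is the minimiser `√b / √c`, perturbed so as to stay positive
  have hbound : ∀ δ > 0, a ≤ 2 * √b * √c + δ * (√b + √c) := by
    intro δ hδ
    have hr := h ((√b + δ) / (√c + δ)) (by positivity)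
    have hb' : b / ((√b + δ) / (√c + δ)) ≤ √b * (√c + δ) := by
      rw [div_div_eq_mul_div, div_le_iff₀ (by positivity)]
      nlinarith [Real.sq_sqrt hb, mul_nonneg hs (add_nonneg ht hδ.le)]
    have hc' : c * ((√b + δ) / (√c + δ)) ≤ √c * (√b + δ) := by
      rw [mul_div_assoc', div_le_iff₀ (by positivity)]
      nlinarith [Real.sq_sqrt hc, mul_nonneg ht (add_nonneg hs hδ.le)]
    nlinarith
  have hlim : Tendsto (fun δ => 2 * √b * √c + δ * (√b + √c)) (nhdsWithin 0 (Set.Ioi 0))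
      (nhds (2 * √(b * c))) := by
    rw [Real.sqrt_mul hb, ← mul_assoc]
    refine tendsto_nhdsWithin_of_tendsto_nhds ?_
    simpa using (continuous_const.add (continuous_id.mul continuous_const)).tendsto
      (0 : ℝ) (f := fun δ : ℝ => 2 * √b * √c + δ * (√b + √c))
  exact ge_of_tendsto hlim (eventually_nhdsWithin_of_forall hbound)

lemma dist_mul_le_of_forall_le_measureReal_ball_div_sq_add {α : Type*} [MetricSpace α]
    [MeasurableSpace α] [OpensMeasurableSpace α] {μ : Measure α} [IsFiniteMeasure μ]
    {f : α → ℝ} (hf : Integrable f μ) (hf0 : 0 ≤ f) {K : Set α} (hK : IsPreconnected K)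
    {a c : ℝ} (ha : 0 ≤ a) (hc : 0 ≤ c)
    (h : ∀ z ∈ K, ∀ r > 0, a ≤ c * μ.real (ball z r) / r ^ 2 + ∫ x in ball z r, f x ∂μ)
    {x₁ x₂ : α} (h₁ : x₁ ∈ K) (h₂ : x₂ ∈ K) :
    dist x₁ x₂ * a ≤ 4 * √(c * μ.real univ * ∫ x, f x ∂μ) := by
  have hW : 0 ≤ ∫ x, f x ∂μ := integral_nonneg hf0
  have hsqrt : 4 * √(c * μ.real univ * ∫ x, f x ∂μ)
      = 2 * √(2 * c * μ.real univ * (2 * ∫ x, f x ∂μ)) := by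
    rw [show 2 * c * μ.real univ * (2 * ∫ x, f x ∂μ) = 2 ^ 2 * (c * μ.real univ * ∫ x, f x ∂μ)
      by ring, Real.sqrt_mul (by positivity : (0 : ℝ) ≤ 2 ^ 2), Real.sqrt_sq zero_le_two]
    ring
  rw [hsqrt]
  refine le_two_sqrt_mul_of_forall_le_div_add_mul (by positivity) (by positivity) fun r hr => ?_
  set n := ⌊dist x₁ x₂ / (2 * r)⌋₊
  have hn : 2 * r * n ≤ dist x₁ x₂ := by
    rw [mul_comm, ← le_div_iff₀ (by positivity)]
    exact Nat.floor_le (by positivity)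
  have hn' : dist x₁ x₂ < 2 * r * (n + 1) := by
    rw [mul_comm, ← div_lt_iff₀ (by positivity)]
    exact Nat.lt_floor_add_one _
  obtain ⟨z, hzK, hdisj⟩ :=
    exists_pairwise_disjoint_balls_of_isPreconnected hK h₁ h₂ hr.le hn
  have hsum := sum_mul_measureReal_add_setIntegral_le (fun k => measurableSet_ball) hdisj hf hf0
    (div_nonneg hc (sq_nonneg r))
  have hcount : (n + 1) * a ≤ c / r ^ 2 * μ.real univ + ∫ x, f x ∂μ :=
    calc (n + 1) * a = ∑ _k : Fin (n + 1), a := by simp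
      _ ≤ ∑ k, (c / r ^ 2 * μ.real (ball (z k) r) + ∫ x in ball (z k) r, f x ∂μ) :=
          Finset.sum_le_sum fun k _ => (h _ (hzK k) r hr).trans_eq (by ring)
      _ ≤ _ := hsum
  calc dist x₁ x₂ * a ≤ 2 * r * (n + 1) * a := by gcongr
    _ ≤ 2 * r * (c / r ^ 2 * μ.real univ + ∫ x, f x ∂μ) := by
        rw [mul_assoc]; gcongr
    _ = 2 * c * μ.real univ / r + 2 * (∫ x, f x ∂μ) * r := by
        field_simp

/-- the upper diameter bound in Simon's lemma. There is a universal constant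
`C > 0` such that for any nonzero admissible triple with perpendicular mean curvature whose
(compact) support is connected and whose lower density is at least `π` at every point of the
support, one has `diam(supp μ) ≤ C √(μ(ℝ³) · ∫ |H|² dμ)`. -/
theorem diam_le_sqrt_mass_mul_willmore :
    ∃ C > (0 : ℝ), ∀ (μ : Measure E3) (P : E3 → E3 →L[ℝ] E3) (H : E3 → E3),
      IsAdmissible μ P H → μ ≠ 0 → IsPerp μ P H → IsConnected (mSupport μ) →
      (∀ y ∈ mSupport μ,
        Real.pi ≤ Filter.liminf (fun σ : ℝ => (μ (ball y σ)).toReal / σ ^ 2)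
          (nhdsWithin 0 (Set.Ioi 0))) →
      diam (mSupport μ) ≤ C * Real.sqrt (Mass μ * Willmore μ H) := by
  refine ⟨4 * √12 / Real.pi, by positivity, fun μ P H adm _ hperp hconn hdens => ?_⟩
  have := adm.finite
  refine diam_le_of_forall_dist_le (by positivity) fun x₁ h₁ x₂ h₂ => ?_
  have hdist := dist_mul_le_of_forall_le_measureReal_ball_div_sq_add
    (adm.memL2.integrable_norm_pow two_ne_zero) (fun x => by positivity) hconn.isPreconnected
    Real.pi_pos.le (by norm_num : (0 : ℝ) ≤ 12)
    (fun z hz r hr => pi_le_measureReal_ball_div_sq_add adm z hperp (hdens z hz) hr) h₁ h₂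
  rw [mul_assoc, Real.sqrt_mul (by norm_num)] at hdist
  rw [div_mul_eq_mul_div, le_div_iff₀ Real.pi_pos]
  simpa only [Mass, Willmore, measureReal_def, ← mul_assoc] using hdist
end
end

section
/- Let x₀ > 0 and let f : (0, x₀] → [0, ∞) be non-decreasing with f(x₀) > 0, and suppose there exist γ ∈ (1/2, 1) and α ∈ (0, 1/8) such that f(x/2) ≤ γ f(x) + α x² for all x ∈ (0, x₀]. Then there exist constants C > 0 and β ∈ (0, 1) such that f(x) ≤ C (x/x₀)^β f(x₀) for all x ∈ (0, x₀]. -/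
/-!
The unperturbed decay lemma: if `h` is non-decreasing on `(0, x₀]` and `h (x/2) ≤ g h x` with
`g ≤ 1`, then iterating gives `h (x₀ / 2ⁿ) ≤ gⁿ h x₀`, and monotonicity interpolates between dyadic
points at the cost of one factor `g`, which yields `h x ≤ g⁻¹ (x/x₀)^β h x₀` with `(1/2)^β = g`.
The perturbation `α x²` is absorbed by applying this to `h x = f x + x²`, which halves with ratio
`max γ (α + 1/4) < 1`.
-/

open Real

theorem pow_le_rpow_logb {b g t : ℝ} (hb₀ : 0 < b) (hb₁ : b < 1) (hg₀ : 0 < g) (hg₁ : g ≤ 1)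
    {m : ℕ} (hbt : b ^ m ≤ t) : g ^ m ≤ t ^ logb b g := by
  calc g ^ m = (b ^ logb b g) ^ m := by rw [rpow_logb hb₀ hb₁.ne hg₀]
    _ = (b ^ m) ^ logb b g := by
        rw [← rpow_natCast, ← rpow_natCast, ← rpow_mul hb₀.le, ← rpow_mul hb₀.le, mul_comm]
    _ ≤ t ^ logb b g :=
        rpow_le_rpow (by positivity) hbt (logb_nonneg_of_base_lt_one hb₀ hb₁ hg₀ hg₁)

theorem exists_div_two_pow_lt_le {x x₀ : ℝ} (hx : x ∈ Set.Ioc 0 x₀) :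
    ∃ n : ℕ, x₀ / 2 ^ (n + 1) < x ∧ x ≤ x₀ / 2 ^ n := by
  obtain ⟨n, hle, hlt⟩ := exists_nat_pow_near ((one_le_div hx.1).2 hx.2) one_lt_two
  rw [le_div_iff₀ hx.1] at hle
  rw [div_lt_iff₀ hx.1] at hlt
  refine ⟨n, ?_, ?_⟩
  · rw [div_lt_iff₀ (by positivity)]
    linarith
  · rw [le_div_iff₀ (by positivity)]
    linarith

theorem div_two_pow_mem_Ioc {x₀ : ℝ} (hx₀ : 0 < x₀) (n : ℕ) : x₀ / 2 ^ n ∈ Set.Ioc 0 x₀ :=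
  ⟨by positivity, div_le_self hx₀.le (one_le_pow₀ one_le_two)⟩

section PowerDecay

variable {x₀ g : ℝ} {h : ℝ → ℝ}

theorem le_pow_mul_of_half_le (hx₀ : 0 < x₀) (hg₀ : 0 ≤ g)
    (hhalf : ∀ x ∈ Set.Ioc 0 x₀, h (x / 2) ≤ g * h x) (n : ℕ) :
    h (x₀ / 2 ^ n) ≤ g ^ n * h x₀ := by
  induction n with
  | zero => simp
  | succ n ih =>
    calc h (x₀ / 2 ^ (n + 1)) = h (x₀ / 2 ^ n / 2) := by rw [pow_succ, div_div]
      _ ≤ g * h (x₀ / 2 ^ n) := hhalf _ (div_two_pow_mem_Ioc hx₀ n)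
      _ ≤ g * (g ^ n * h x₀) := mul_le_mul_of_nonneg_left ih hg₀
      _ = g ^ (n + 1) * h x₀ := by ring

theorem power_decay (hx₀ : 0 < x₀) (hg₀ : 0 < g) (hg₁ : g ≤ 1)
    (hmono : MonotoneOn h (Set.Ioc 0 x₀)) (hhx₀ : 0 ≤ h x₀)
    (hhalf : ∀ x ∈ Set.Ioc 0 x₀, h (x / 2) ≤ g * h x) :
    ∀ x ∈ Set.Ioc 0 x₀, h x ≤ (x / x₀) ^ logb (1 / 2) g * h x₀ / g := by
  intro x hx
  obtain ⟨n, hlt, hle⟩ := exists_div_two_pow_lt_le hx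
  have hpow : g ^ (n + 1) ≤ (x / x₀) ^ logb (1 / 2) g := by
    refine pow_le_rpow_logb (by norm_num) (by norm_num) hg₀ hg₁ ?_
    rw [le_div_iff₀ hx₀, one_div_pow, one_div_mul_eq_div]
    exact hlt.le
  calc h x ≤ h (x₀ / 2 ^ n) := hmono hx (div_two_pow_mem_Ioc hx₀ n) hle
    _ ≤ g ^ n * h x₀ := le_pow_mul_of_half_le hx₀ hg₀.le hhalf n
    _ = g ^ (n + 1) * h x₀ / g := by field_simp; ring
    _ ≤ (x / x₀) ^ logb (1 / 2) g * h x₀ / g := by gcongr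

end PowerDecay

/-- the perturbed power-decay lemma (Corollary A.4 of the paper). If
`f : (0, x₀] → [0, ∞)` is non-decreasing with `f(x₀) > 0` and
`f(x/2) ≤ γ f(x) + α x²` on `(0, x₀]` with `γ ∈ (1/2, 1)` and `α ∈ (0, 1/8)`, then
`f(x) ≤ C (x/x₀)^β f(x₀)` on `(0, x₀]` for some `C > 0` and `β ∈ (0,1)`. -/
theorem power_decay_perturbed (x₀ : ℝ) (hx₀ : 0 < x₀) (f : ℝ → ℝ)
    (hnonneg : ∀ x ∈ Set.Ioc 0 x₀, 0 ≤ f x) (hfx₀ : 0 < f x₀)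
    (hmono : ∀ x ∈ Set.Ioc 0 x₀, ∀ y ∈ Set.Ioc 0 x₀, x ≤ y → f x ≤ f y)
    (γ : ℝ) (hγ : γ ∈ Set.Ioo (1 / 2 : ℝ) 1)
    (α : ℝ) (hα : α ∈ Set.Ioo (0 : ℝ) (1 / 8))
    (hhalf : ∀ x ∈ Set.Ioc 0 x₀, f (x / 2) ≤ γ * f x + α * x ^ 2) :
    ∃ C > (0 : ℝ), ∃ β ∈ Set.Ioo (0 : ℝ) 1,
      ∀ x ∈ Set.Ioc 0 x₀, f x ≤ C * (x / x₀) ^ β * f x₀ := by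
  set g := max γ (α + 1 / 4)
  have hg₁ : 1 / 2 < g := lt_max_of_lt_left hγ.1
  have hg₂ : g < 1 := max_lt hγ.2 (by linarith [hα.2])
  have hmono_h : MonotoneOn (fun x ↦ f x + x ^ 2) (Set.Ioc 0 x₀) := fun x hx y hy hxy ↦
    add_le_add (hmono x hx y hy hxy) (pow_le_pow_left₀ hx.1.le hxy 2)
  have hhalf_h : ∀ x ∈ Set.Ioc 0 x₀, f (x / 2) + (x / 2) ^ 2 ≤ g * (f x + x ^ 2) := by
    intro x hx
    have hγf : γ * f x ≤ g * f x :=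
      mul_le_mul_of_nonneg_right (le_max_left _ _) (hnonneg x hx)
    have hαx : (α + 1 / 4) * x ^ 2 ≤ g * x ^ 2 :=
      mul_le_mul_of_nonneg_right (le_max_right _ _) (sq_nonneg x)
    linarith [hhalf x hx]
  refine ⟨(f x₀ + x₀ ^ 2) / (g * f x₀), by positivity, logb (1 / 2) g,
    ⟨logb_pos_of_base_lt_one (by norm_num) (by norm_num) (by linarith) hg₂, ?_⟩, fun x hx ↦ ?_⟩
  · calc logb (1 / 2) g < logb (1 / 2) (1 / 2) :=
          logb_lt_logb_of_base_lt_one (by norm_num) (by norm_num) (by norm_num) hg₁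
      _ = 1 := logb_self_eq_one_iff.2 ⟨by norm_num, by norm_num, by norm_num⟩
  calc f x ≤ f x + x ^ 2 := le_add_of_nonneg_right (sq_nonneg x)
    _ ≤ (x / x₀) ^ logb (1 / 2) g * (f x₀ + x₀ ^ 2) / g :=
        power_decay hx₀ (by linarith) hg₂.le hmono_h (by positivity) hhalf_h x hx
    _ = (f x₀ + x₀ ^ 2) / (g * f x₀) * (x / x₀) ^ logb (1 / 2) g * f x₀ := by
        field_simp
end
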